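/- arXiv:1409.7744 — 4 statements merged into one kernel-verified Lean document; each statement's English description precedes it below -/
import Mathlib

section
/- Let v_1, ..., v_n be a basis of R^n and set t_{0,j} = v_j for 1 ≤ j ≤ n and t_{i,j} = v_j - v_i for 1 ≤ i < j ≤ n. Then the n(n+1)/2 symmetric rank-one matrices T_{i,j} = t_{i,j} t_{i,j}^T, 0 ≤ i < j ≤ n, are linearly independent and hence form a basis of the space of symmetric n×n real matrices. -/
open Matrix

/-- The submodule of symmetric n×n real matrices. -/
def symmetricMatrices (n : ℕ) : Submodule ℝ (Matrix (Fin n) (Fin n) ℝ) where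
  carrier := {A | A.IsSymm}
  add_mem' := fun ha hb => ha.add hb
  zero_mem' := Matrix.isSymm_zero
  smul_mem' := fun c _ ha => ha.smul c

/-!
Let `ℓ₀, …, ℓₙ` be the linear parts of the barycentric coordinates of the simplex, so that
`ℓₐ (xⱼ - xᵢ) = δₐⱼ - δₐᵢ`. For `a < b` the functional `A ↦ -ℓₐᵀ A ℓ_b` is `1` on `T_{a,b}`
and `0` on every other `T_{i,j}`, so the `T_{i,j}` are linearly independent. For spanning,
polarization `u wᵀ + w uᵀ = u uᵀ + w wᵀ - (u - w)(u - w)ᵀ` puts `vₖ vₗᵀ + vₗ vₖᵀ` in the span,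
hence by bilinearity every `u wᵀ + w uᵀ`; a symmetric `A` is half the sum of `eₖ Aₖᵀ + Aₖ eₖᵀ`
over its rows `Aₖ`.
-/

open Submodule Set

section EdgeTensor

variable {R ι m : Type*} [CommRing R]

theorem Matrix.vecMulVec_add_vecMulVec_eq (u w : m → R) :
    vecMulVec u w + vecMulVec w u =
      vecMulVec u u + vecMulVec w w - vecMulVec (u - w) (u - w) := by
  ext a b
  simp only [add_apply, sub_apply, vecMulVec_apply, Pi.sub_apply]
  ring

theorem Matrix.vecMulVec_add_vecMulVec_mem_of_span_eq_top {s : Set (m → R)}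
    (hs : span R s = ⊤) {W : Submodule R (Matrix m m R)}
    (hW : ∀ u ∈ s, ∀ w ∈ s, vecMulVec u w + vecMulVec w u ∈ W) (u w : m → R) :
    vecMulVec u w + vecMulVec w u ∈ W := by
  let B : (m → R) →ₗ[R] (m → R) →ₗ[R] Matrix m m R :=
    vecMulVecBilin R R + (vecMulVecBilin R R).flip
  have hB : map₂ B (span R s) (span R s) ≤ W := by
    rw [map₂_span_span, span_le]
    rintro _ ⟨u, hu, w, hw, rfl⟩
    exact hW u hu w hw
  exact hB (apply_mem_map₂ B (hs ▸ mem_top) (hs ▸ mem_top))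

variable [LinearOrder ι]

def edgeTensor (x : ι → m → R) (p : {p : ι × ι // p.1 < p.2}) : Matrix m m R :=
  vecMulVec (x p.1.2 - x p.1.1) (x p.1.2 - x p.1.1)

theorem vecMulVec_single_sub_single_apply_of_lt {i j a b : ι} (hij : i < j) (hab : a < b) :
    vecMulVec (Pi.single j 1 - Pi.single i 1 : ι → R) (Pi.single j 1 - Pi.single i 1) a b =
      if (a, b) = (i, j) then -1 else 0 := by
  simp only [vecMulVec_apply, Pi.sub_apply, Pi.single_apply, Prod.mk.injEq, ite_and]
  split_ifs <;> subst_vars <;> first | order | simp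

theorem linearIndependent_edgeTensor [Fintype m] (x : ι → m → R) (Λ : Matrix ι m R)
    (hΛ : ∀ i j, Λ *ᵥ (x j - x i) = Pi.single j 1 - Pi.single i 1) :
    LinearIndependent R (edgeTensor x) := by
  let Ψ : Matrix m m R →ₗ[R] {p : ι × ι // p.1 < p.2} → R := LinearMap.pi fun q =>
    -(entryLinearMap R R q.1.1 q.1.2 ∘ₗ mulLeftLinearMap ι R Λ ∘ₗ mulRightLinearMap m R Λᵀ)
  have hΨ : Ψ ∘ edgeTensor x = fun p => Pi.single p 1 := by
    funext p
    ext q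
    simp only [Ψ, Function.comp_apply, edgeTensor, LinearMap.pi_apply, LinearMap.neg_apply,
      LinearMap.coe_comp, mulRightLinearMap_apply, vecMulVec_mul, vecMul_transpose, hΛ,
      mulLeftLinearMap_apply, mul_vecMulVec, entryLinearMap_apply,
      vecMulVec_single_sub_single_apply_of_lt p.2 q.2, Prod.mk.eta, Pi.single_apply,
      Subtype.ext_iff]
    split_ifs <;> simp
  exact .of_comp Ψ (hΨ ▸ Pi.linearIndependent_single_one _ R)

theorem vecMulVec_sub_mem_span_edgeTensor (x : ι → m → R) (i j : ι) :
    vecMulVec (x j - x i) (x j - x i) ∈ span R (range (edgeTensor x)) := by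
  rcases lt_trichotomy i j with h | rfl | h
  · exact subset_span ⟨⟨(i, j), h⟩, rfl⟩
  · simp
  · rw [← neg_sub, neg_vecMulVec, vecMulVec_neg, neg_neg]
    exact subset_span ⟨⟨(j, i), h⟩, rfl⟩

theorem vecMulVec_add_vecMulVec_mem_span_edgeTensor (x : ι → m → R) (i j k : ι) :
    vecMulVec (x j - x i) (x k - x i) + vecMulVec (x k - x i) (x j - x i) ∈
      span R (range (edgeTensor x)) := by
  rw [vecMulVec_add_vecMulVec_eq, sub_sub_sub_cancel_right]
  exact sub_mem (add_mem (vecMulVec_sub_mem_span_edgeTensor x i j)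
    (vecMulVec_sub_mem_span_edgeTensor x i k)) (vecMulVec_sub_mem_span_edgeTensor x k j)

end EdgeTensor

-- The rows of `Λ` are the linear parts of the barycentric coordinates of the simplex `x`.
theorem exists_mulVec_sub_eq_single_sub_single {R m : Type*} [CommRing R] [Fintype m]
    [DecidableEq m] {n : ℕ} (b : Module.Basis (Fin n) R (m → R)) (x : Fin (n + 1) → m → R)
    (hx : ∀ k, x k.succ - x 0 = b k) :
    ∃ Λ : Matrix (Fin (n + 1)) m R,
      ∀ i j, Λ *ᵥ (x j - x i) = Pi.single j 1 - Pi.single i 1 := by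
  let L := b.constr R fun k => (Pi.single k.succ 1 - Pi.single 0 1 : Fin (n + 1) → R)
  have hL : ∀ j, L (x j - x 0) = Pi.single j 1 - Pi.single 0 1 := by
    refine Fin.cases (by simp) fun k => ?_
    rw [hx, b.constr_basis]
  refine ⟨LinearMap.toMatrix' L, fun i j => ?_⟩
  rw [← Matrix.toLin'_apply, Matrix.toLin'_toMatrix', ← sub_sub_sub_cancel_right (x j) (x i) (x 0),
    map_sub, hL, hL, sub_sub_sub_cancel_right]

theorem symmetricMatrices_le_of_vecMulVec_add_mem {n : ℕ}
    {W : Submodule ℝ (Matrix (Fin n) (Fin n) ℝ)}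
    (hW : ∀ u w, vecMulVec u w + vecMulVec w u ∈ W) : symmetricMatrices n ≤ W := by
  intro A (hA : Aᵀ = A)
  have hrows : A = ∑ k, vecMulVec (Pi.single k 1) (A k) := by
    ext i j
    simp [Matrix.sum_apply, vecMulVec_apply, Pi.single_apply]
  have hcols : A = ∑ k, vecMulVec (A k) (Pi.single k 1) := by
    conv_lhs => rw [← hA, hrows]
    simp [transpose_sum]
  have h2 : (2 : ℝ) • A =
      ∑ k, (vecMulVec (Pi.single k 1) (A k) + vecMulVec (A k) (Pi.single k 1)) := by
    rw [two_smul, Finset.sum_add_distrib, ← hrows, ← hcols]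
  have := W.smul_mem (2 : ℝ)⁻¹ (h2 ▸ sum_mem fun k _ => hW _ _)
  rwa [smul_smul, inv_mul_cancel₀ two_ne_zero, one_smul] at this

/-- Given a basis v_1, ..., v_n of ℝ^n, with x_0 = 0 and x_j = v_j, the rank-one
matrices T_{i,j} = t_{i,j} t_{i,j}ᵀ with t_{i,j} = x_j - x_i, 0 ≤ i < j ≤ n, are
linearly independent and form a basis of the space of symmetric matrices. -/
theorem rank_one_tensors_basis (n : ℕ) (v : Fin n → (Fin n → ℝ))
    (hv : LinearIndependent ℝ v)
    (x : Fin (n + 1) → (Fin n → ℝ))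
    (hx0 : x 0 = 0) (hxs : ∀ j : Fin n, x j.succ = v j)
    (T : {p : Fin (n + 1) × Fin (n + 1) // p.1 < p.2} → Matrix (Fin n) (Fin n) ℝ)
    (hT : ∀ p, T p = Matrix.vecMulVec (x p.1.2 - x p.1.1) (x p.1.2 - x p.1.1)) :
    LinearIndependent ℝ T ∧
      Submodule.span ℝ (Set.range T) = symmetricMatrices n := by
  obtain rfl : T = edgeTensor x := funext hT
  have hspan : span ℝ (range v) = ⊤ := hv.span_eq_top_of_card_eq_finrank' (by simp)
  obtain ⟨Λ, hΛ⟩ :=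
    exists_mulVec_sub_eq_single_sub_single (.mk hv hspan.ge) x (by simp [hx0, hxs])
  refine ⟨linearIndependent_edgeTensor x Λ hΛ, le_antisymm ?_ ?_⟩
  · exact span_le.2 <| range_subset_iff.2 fun p => transpose_vecMulVec _ _
  · refine symmetricMatrices_le_of_vecMulVec_add_mem <|
      vecMulVec_add_vecMulVec_mem_of_span_eq_top hspan ?_
    rintro _ ⟨k, rfl⟩ _ ⟨l, rfl⟩
    simpa [hx0, hxs] using vecMulVec_add_vecMulVec_mem_span_edgeTensor x 0 k.succ l.succ
end

section
/- For all natural numbers n and k ≥ 1, the variant Chu-Vandermonde identity holds: ∑_{ℓ=0}^{n} C(n+1, ℓ+1) · C(k-1, ℓ) · C(ℓ+1, 2) = (n(n+1)/2) · C(n+k-2, n). -/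
/-!
Since `C(n+1, ℓ+1) · C(ℓ+1, 2) = C(n+1, 2) · C(n-1, ℓ-1)` (choose the pair inside the
`ℓ+1`-subset first or last), the factor `C(n+1, 2) = n(n+1)/2` comes out of the sum, and
what remains, `∑ C(n-1, ℓ-1) · C(k-1, ℓ)`, is Vandermonde's convolution for `C(n+k-2, n)`.
-/

open Finset

theorem Nat.sum_range_choose_mul_choose_succ (t p : ℕ) :
    ∑ i ∈ range (t + 1), t.choose i * p.choose (i + 1) = (t + p).choose (t + 1) := by
  rw [add_comm t p, Nat.add_choose_eq, Nat.sum_antidiagonal_eq_sum_range_succ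
    (fun a b => p.choose a * t.choose b), sum_range_succ' (fun k => p.choose k * _),
    Nat.sub_zero, Nat.choose_succ_self, mul_zero, add_zero]
  refine sum_congr rfl fun i hi => ?_
  rw [Nat.add_sub_add_right, Nat.choose_symm (mem_range_succ_iff.mp hi), mul_comm]

theorem Nat.choose_add_two_mul_choose_two (n i : ℕ) :
    (n + 2).choose (i + 2) * (i + 2).choose 2 = (n + 2).choose 2 * n.choose i := by
  simpa using Nat.choose_mul (n := n + 2) (k := i + 2) (s := 2) (by omega)

/-- Variant Chu-Vandermonde identity:
∑_{ℓ=0}^{n} C(n+1, ℓ+1) · C(k-1, ℓ) · C(ℓ+1, 2) = (n(n+1)/2) · C(n+k-2, n). -/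
theorem chu_vandermonde_variant (n k : ℕ) (hk : 1 ≤ k) :
    ∑ ℓ ∈ Finset.range (n + 1),
        (n + 1).choose (ℓ + 1) * (k - 1).choose ℓ * (ℓ + 1).choose 2
      = n * (n + 1) / 2 * (n + k - 2).choose n := by
  obtain ⟨m, rfl⟩ : ∃ m, k = m + 1 := ⟨k - 1, by omega⟩
  rcases n with _ | t
  · simp
  calc ∑ ℓ ∈ range (t + 2), (t + 2).choose (ℓ + 1) * (m + 1 - 1).choose ℓ * (ℓ + 1).choose 2
      = ∑ i ∈ range (t + 1), (t + 2).choose 2 * (t.choose i * m.choose (i + 1)) := by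
        rw [sum_range_succ']
        simp only [Nat.add_sub_cancel, zero_add, Nat.choose_eq_zero_of_lt one_lt_two, mul_zero,
          add_zero]
        refine sum_congr rfl fun i _ => ?_
        rw [mul_right_comm, Nat.choose_add_two_mul_choose_two]
        ring
    _ = (t + 1) * (t + 1 + 1) / 2 * (t + 1 + (m + 1) - 2).choose (t + 1) := by
        rw [← mul_sum, Nat.sum_range_choose_mul_choose_succ, Nat.choose_two_right,
          show t + 1 + (m + 1) - 2 = t + m by omega, show t + 2 - 1 = t + 1 by omega,
          mul_comm (t + 2)]
end

section
/- For all natural numbers n ≥ 1 and k ≥ 1: ∑_{ℓ=0}^{n-1} C(n+1, ℓ+1) · ((n-ℓ)(n+ℓ+1)/2) · C(k-1, ℓ) + (n(n+1)/2) · C(n+k-2, n) = (n(n+1)/2) · C(n+k, n). -/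
/-!
The weight `(n - ℓ)(n + ℓ + 1)/2` is `C(n+1, 2) - C(ℓ+1, 2)`, so after extending the sum by the
vanishing term `ℓ = n` it splits into two Vandermonde convolutions:
`∑ C(n+1, ℓ+1) C(k-1, ℓ) = C(n+k, n)` and, since `C(n+1, ℓ+1) C(ℓ+1, 2) = C(n+1, 2) C(n-1, ℓ-1)`,
`∑ C(n+1, ℓ+1) C(ℓ+1, 2) C(k-1, ℓ) = C(n+1, 2) C(n+k-2, n)`.
-/

open Finset

theorem Nat.add_choose_eq_sum_range (m n r : ℕ) :
    (m + n).choose r = ∑ i ∈ range (r + 1), m.choose i * n.choose (r - i) := by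
  rw [Nat.add_choose_eq, Nat.sum_antidiagonal_eq_sum_range_succ_mk]

theorem sum_range_choose_succ_mul_choose (n m : ℕ) :
    ∑ ℓ ∈ range (n + 1), (n + 1).choose (ℓ + 1) * m.choose ℓ = (m + (n + 1)).choose n := by
  rw [Nat.add_choose_eq_sum_range]
  refine sum_congr rfl fun ℓ hℓ => ?_
  have := mem_range_succ_iff.mp hℓ
  rw [mul_comm, Nat.choose_symm_of_eq_add (by omega : n + 1 = (ℓ + 1) + (n - ℓ))]

theorem sum_range_choose_mul_choose_succ (n m : ℕ) :
    ∑ j ∈ range (n + 1), n.choose j * m.choose (j + 1) = (m + n).choose (n + 1) := by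
  rw [Nat.add_choose_eq_sum_range, sum_range_succ' _ (n + 1), Nat.sub_zero, Nat.choose_succ_self,
    mul_zero, add_zero]
  refine sum_congr rfl fun j hj => ?_
  have := mem_range_succ_iff.mp hj
  rw [mul_comm, Nat.choose_symm_of_eq_add (by omega : n = j + (n + 1 - (j + 1)))]

theorem sum_range_choose_succ_mul_choose_two_mul_choose (n m : ℕ) :
    ∑ ℓ ∈ range (n + 1), (n + 1).choose (ℓ + 1) * (ℓ + 1).choose 2 * m.choose ℓ
      = (n + 1).choose 2 * (n + m - 1).choose n := by
  rcases n with _ | p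
  · simp
  rw [sum_range_succ', show p + 1 + m - 1 = m + p by omega, ← sum_range_choose_mul_choose_succ p m,
    mul_sum, zero_add, Nat.choose_eq_zero_of_lt one_lt_two, mul_zero, zero_mul, add_zero]
  refine sum_congr rfl fun j _ => ?_
  rw [Nat.choose_mul (by omega : 2 ≤ j + 1 + 1), mul_assoc]
  rfl

theorem Nat.succ_choose_two (n : ℕ) : (n + 1).choose 2 = n * (n + 1) / 2 := by
  rw [Nat.choose_two_right, Nat.add_sub_cancel, mul_comm]

theorem tsub_mul_add_add_one_div_two_add_choose_two {ℓ n : ℕ} (h : ℓ ≤ n) :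
    (n - ℓ) * (n + ℓ + 1) / 2 + (ℓ + 1).choose 2 = (n + 1).choose 2 := by
  obtain ⟨d, rfl⟩ := Nat.exists_eq_add_of_le h
  rw [Nat.succ_choose_two, Nat.succ_choose_two, Nat.add_sub_cancel_left,
    ← Nat.add_div_of_dvd_left (Nat.even_mul_succ_self ℓ).two_dvd]
  congr 1
  ring

theorem dof_count_general (n k : ℕ) (hk : 1 ≤ k) :
    (∑ ℓ ∈ Finset.range n,
        (n + 1).choose (ℓ + 1) * ((n - ℓ) * (n + ℓ + 1) / 2) * (k - 1).choose ℓ)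
      + n * (n + 1) / 2 * (n + k - 2).choose n
      = n * (n + 1) / 2 * (n + k).choose n := by
  obtain ⟨m, rfl⟩ := Nat.exists_eq_add_of_le' hk
  have hweights :
      ∑ ℓ ∈ range (n + 1), (n + 1).choose (ℓ + 1) * ((n - ℓ) * (n + ℓ + 1) / 2) * m.choose ℓ
        + ∑ ℓ ∈ range (n + 1), (n + 1).choose (ℓ + 1) * (ℓ + 1).choose 2 * m.choose ℓ
        = (n + 1).choose 2 * ∑ ℓ ∈ range (n + 1), (n + 1).choose (ℓ + 1) * m.choose ℓ := by
    rw [← sum_add_distrib, mul_sum]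
    refine sum_congr rfl fun ℓ hℓ => ?_
    rw [← tsub_mul_add_add_one_div_two_add_choose_two (mem_range_succ_iff.mp hℓ)]
    ring
  rw [sum_range_succ, Nat.sub_self, zero_mul, Nat.zero_div, mul_zero, zero_mul, add_zero,
    sum_range_choose_succ_mul_choose_two_mul_choose, sum_range_choose_succ_mul_choose,
    Nat.succ_choose_two] at hweights
  rwa [Nat.add_sub_cancel, show n + (m + 1) - 2 = n + m - 1 by omega,
    show n + (m + 1) = m + (n + 1) by omega]

/-- The degree-of-freedom count: interface moments plus bubble degrees of freedom
equal the dimension of symmetric-matrix-valued polynomials of degree at most k. -/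
theorem dof_count (n k : ℕ) (hn : 1 ≤ n) (hk : 1 ≤ k) :
    (∑ ℓ ∈ Finset.range n,
        (n + 1).choose (ℓ + 1) * ((n - ℓ) * (n + ℓ + 1) / 2) * (k - 1).choose ℓ)
      + n * (n + 1) / 2 * (n + k - 2).choose n
      = n * (n + 1) / 2 * (n + k).choose n :=
  dof_count_general n k hk
end

section
/- Let x_0, ..., x_n be the vertices of a nondegenerate simplex K ⊂ R^n with barycentric coordinate functions λ_0, ..., λ_n. For every pair 0 ≤ i < j ≤ n, every polynomial q of degree at most k-2, and every face F of K (an (n-1)-dimensional subsimplex) with unit normal ν, the symmetric matrix field τ = λ_i λ_j q T_{i,j} (with T_{i,j} = t_{i,j} t_{i,j}^T, t_{i,j} = x_j - x_i) satisfies τν = 0 on F. -/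
/-!
τν is a multiple of (t_{i,j} ⬝ ν) t_{i,j}, with scalar factor λ_i λ_j q. If the face F omits
vertex i or j, the corresponding λ vanishes on F: it is affine and vanishes at the vertices
spanning F, hence on their convex hull. Otherwise both x_i and x_j lie in F, so t_{i,j} ⬝ ν = 0.
-/

open MvPolynomial Matrix

theorem Finsupp.eq_zero_or_eq_single_of_sum_le_one {σ : Type*} {d : σ →₀ ℕ}
    (hd : (d.sum fun _ e => e) ≤ 1) : d = 0 ∨ ∃ i, d = Finsupp.single i 1 := by
  rcases Nat.le_one_iff_eq_zero_or_eq_one.mp hd with h | h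
  · exact Or.inl ((Finsupp.degree_eq_zero_iff d).mp h)
  · exact Or.inr ((Finsupp.sum_eq_one_iff d).mp h)

namespace MvPolynomial

variable {σ : Type*}

theorem eval_add_smul_of_totalDegree_le_one {R : Type*} [CommRing R] {p : MvPolynomial σ R}
    (hp : p.totalDegree ≤ 1) (z w : σ → R) {a b : R} (hab : a + b = 1) :
    eval (a • z + b • w) p = a * eval z p + b * eval w p := by
  conv_lhs => rw [p.as_sum]
  conv_rhs => rw [p.as_sum]
  simp only [map_sum, Finset.mul_sum, ← Finset.sum_add_distrib]
  refine Finset.sum_congr rfl fun d hd => ?_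
  rcases Finsupp.eq_zero_or_eq_single_of_sum_le_one ((le_totalDegree hd).trans hp)
    with rfl | ⟨i, rfl⟩
  · simp only [eval_monomial, Finsupp.prod_zero_index]
    linear_combination (-(p.coeff 0)) * hab
  · simp only [eval_monomial, Finsupp.prod_single_index, pow_zero, pow_one, Pi.add_apply,
      Pi.smul_apply, smul_eq_mul]
    ring

theorem eval_eq_zero_of_mem_convexHull {𝕜 : Type*} [Field 𝕜] [LinearOrder 𝕜]
    [IsStrictOrderedRing 𝕜] {p : MvPolynomial σ 𝕜} (hp : p.totalDegree ≤ 1) {s : Set (σ → 𝕜)}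
    (hs : ∀ z ∈ s, eval z p = 0) {y : σ → 𝕜} (hy : y ∈ convexHull 𝕜 s) : eval y p = 0 := by
  have hconvex : Convex 𝕜 {z : σ → 𝕜 | eval z p = 0} := by
    intro z hz w hw a b _ _ hab
    simp_all [eval_add_smul_of_totalDegree_le_one hp z w hab]
  exact convexHull_min hs hconvex hy

end MvPolynomial

theorem Matrix.smul_vecMulVec_self_mulVec {n R : Type*} [Fintype n] [CommRing R]
    (c : R) (t ν : n → R) : (c • vecMulVec t t) *ᵥ ν = (c * (t ⬝ᵥ ν)) • t := by
  rw [smul_mulVec, vecMulVec_mulVec, op_smul_eq_smul, smul_smul]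

theorem bubble_normal_trace_vanishes_general (n : ℕ)
    (x : Fin (n + 1) → (Fin n → ℝ))
    (lam : Fin (n + 1) → MvPolynomial (Fin n) ℝ)
    (hlamdeg : ∀ m, (lam m).totalDegree ≤ 1)
    (hlamval : ∀ m l, eval (x l) (lam m) = if m = l then 1 else 0)
    (i j : Fin (n + 1))
    (q : MvPolynomial (Fin n) ℝ)
    (m : Fin (n + 1)) (F : Set (Fin n → ℝ))
    (hF : F = convexHull ℝ (x '' {l | l ≠ m}))
    (ν : Fin n → ℝ)
    (hνnormal : ∀ l l' : Fin (n + 1), l ≠ m → l' ≠ m →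
      dotProduct ν (x l' - x l) = 0) :
    ∀ y ∈ F,
      Matrix.mulVec
        ((eval y (lam i) * eval y (lam j) * eval y q) •
          Matrix.vecMulVec (x j - x i) (x j - x i)) ν = 0 := by
  intro y hy
  subst hF
  have hlam_face : eval y (lam m) = 0 := by
    refine eval_eq_zero_of_mem_convexHull (hlamdeg m) ?_ hy
    rintro _ ⟨l, hl, rfl⟩
    simp [hlamval, Ne.symm hl]
  rw [smul_vecMulVec_self_mulVec, dotProduct_comm]
  by_cases him : i = m
  · simp [him, hlam_face]
  by_cases hjm : j = m
  · simp [hjm, hlam_face]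
  simp [hνnormal i j him hjm]

/-- The bubble field τ = λ_i λ_j q T_{i,j} satisfies τν = 0 on every face of
the simplex K. -/
theorem bubble_normal_trace_vanishes (n k : ℕ)
    (x : Fin (n + 1) → (Fin n → ℝ)) (hx : AffineIndependent ℝ x)
    (lam : Fin (n + 1) → MvPolynomial (Fin n) ℝ)
    (hlamdeg : ∀ m, (lam m).totalDegree ≤ 1)
    (hlamval : ∀ m l, eval (x l) (lam m) = if m = l then 1 else 0)
    (hlamsum : ∑ m, lam m = 1)
    (i j : Fin (n + 1)) (hij : i < j)
    (q : MvPolynomial (Fin n) ℝ) (hq : q.totalDegree ≤ k - 2)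
    (m : Fin (n + 1)) (F : Set (Fin n → ℝ))
    (hF : F = convexHull ℝ (x '' {l | l ≠ m}))
    (ν : Fin n → ℝ) (hν : ν ≠ 0)
    (hνnormal : ∀ l l' : Fin (n + 1), l ≠ m → l' ≠ m →
      dotProduct ν (x l' - x l) = 0) :
    ∀ y ∈ F,
      Matrix.mulVec
        ((eval y (lam i) * eval y (lam j) * eval y q) •
          Matrix.vecMulVec (x j - x i) (x j - x i)) ν = 0 :=
  bubble_normal_trace_vanishes_general n x lam hlamdeg hlamval i j q m F hF ν hνnormal
end
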